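/- arXiv:2202.08321 — 2 statements merged into one kernel-verified Lean document; each statement's English description precedes it below -/
import Mathlib

section
/- For p large enough, ( ∑_{n ∈ ℕ*, n ≠ p} 1/|λ_n − λ_p + λ| )² ≥ 1/p, for any fixed real λ > 0, where λ_n = −i·(n(g + n²)·tanh(hn))^{1/2}. Consequently the family (q_n) fails the quadratically-close (Hilbert–Schmidt) criterion in L². -/
/-!
Write `ω_n = √(n (g + n²) tanh (h n))`, so that `λ_n - λ_p + λ = λ + i (ω_p - ω_n)`.
Since `1 - tanh x ≤ 2 e^{-2x}`, eventually `ω_p² ≥ p³ - 1`, while always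
`ω_{p+k}² ≤ (p + k)(g + (p + k)²)`; comparing squares, the gaps satisfy
`ω_{p+k} - ω_p + λ ≤ 2 k √p` for `k = 1, …, 4` and `p` large. These four terms alone give
`∑_{k ≤ 4} 1 / (2 k √p) = 25 / (24 √p) ≥ 1 / √p`, and squaring yields `1 / p`, whose series
diverges. The series over `n` converges because `ω_n ≥ n^{3/2} / 2` eventually.
-/
open Real Filter Finset

namespace Real

theorem tanh_le_tanh {x y : ℝ} (hxy : x ≤ y) : tanh x ≤ tanh y := by
  have mem : ∀ z, tanh z ∈ Set.Ioo (-1) 1 := fun z => ⟨neg_one_lt_tanh z, tanh_lt_one z⟩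
  rwa [← artanh_le_artanh_iff (mem x) (mem y), artanh_tanh, artanh_tanh]

theorem tanh_nonneg {x : ℝ} (hx : 0 ≤ x) : 0 ≤ tanh x := by
  simpa using tanh_le_tanh hx

theorem one_sub_two_mul_exp_neg_le_tanh (x : ℝ) : 1 - 2 * exp (-(2 * x)) ≤ tanh x := by
  have hx : exp x * exp (-x) = 1 := by rw [← exp_add, add_neg_cancel, exp_zero]
  have h2x : exp (-(2 * x)) = exp (-x) * exp (-x) := by rw [← exp_add]; ring_nf
  rw [tanh_eq, le_div_iff₀ (by positivity), h2x]
  nlinarith [exp_pos x, exp_pos (-x), pow_pos (exp_pos (-x)) 3]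

end Real

theorem sub_add_le_of_sq_bounds {a b c g k q : ℝ} (hc : 0 ≤ c) (hg : 0 ≤ g) (hk : 1 ≤ k)
    (hb : 0 ≤ b) (hq : 2 * c + (g + 2) * (k + 1) ^ 3 ≤ q)
    (ha : a ^ 2 ≤ (q ^ 2 + k) * (g + (q ^ 2 + k) ^ 2)) (hb' : q ^ 6 - 1 ≤ b ^ 2) :
    a - b + c ≤ 2 * k * q := by
  have hk3 : 2 * k ^ 3 + 6 * k ^ 2 + 6 * k + 2 + g * (k + 1) ≤ (g + 2) * (k + 1) ^ 3 := by
    nlinarith [mul_le_mul_of_nonneg_left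
      (le_self_pow₀ (by linarith : 1 ≤ k + 1) three_ne_zero) hg]
  have hq1 : 1 ≤ q := by nlinarith
  have hq3 : 1 ≤ q ^ 3 := one_le_pow₀ hq1
  have hA : 0 ≤ 2 * k * q - c := by nlinarith
  -- compare `a²` with `(b + (2 k q - c))²`: the `q⁶` terms cancel and `k q⁴` dominates the rest
  have hb_ge : q ^ 3 - 1 ≤ b := le_of_sq_le_sq (by nlinarith) hb
  have hpoly : (q ^ 2 + k) * (g + (q ^ 2 + k) ^ 2) ≤
      q ^ 6 - 1 + 2 * (q ^ 3 - 1) * (2 * k * q - c) := by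
    have hq2 : 0 ≤ q ^ 3 - q ^ 2 := by nlinarith
    have hq1' : 0 ≤ q ^ 3 - q := by nlinarith
    have hlead : (2 * c + (g + 2) * (k + 1) ^ 3) * q ^ 3 ≤ k * q ^ 4 := by
      nlinarith [mul_le_mul_of_nonneg_right hq (by positivity : 0 ≤ q ^ 3),
        mul_le_mul_of_nonneg_right hk (by positivity : 0 ≤ q ^ 4)]
    nlinarith [mul_nonneg (sq_nonneg k) hq2, mul_nonneg hg hq2,
      mul_nonneg (by linarith : 0 ≤ k) hq1',
      mul_nonneg (pow_nonneg (by linarith : 0 ≤ k) 3) (sub_nonneg.mpr hq3),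
      mul_nonneg (mul_nonneg hg (by linarith : 0 ≤ k)) (sub_nonneg.mpr hq3),
      mul_le_mul_of_nonneg_right hk3 (by positivity : 0 ≤ q ^ 3)]
  have : a ≤ b + (2 * k * q - c) := by
    refine le_of_sq_le_sq ?_ (by linarith)
    nlinarith [mul_nonneg (sub_nonneg.mpr hb_ge) hA]
  linarith

theorem summable_one_div_of_rpow_le_add {u : ℕ → ℝ} {b c r : ℝ} (hc : 0 < c) (hr : 1 < r)
    (hu : ∀ᶠ n : ℕ in atTop, c * (n : ℝ) ^ r ≤ u n + b) : Summable fun n => 1 / u n := by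
  have hgrow : ∀ᶠ n : ℕ in atTop, 2 * b ≤ c * (n : ℝ) ^ r :=
    (((tendsto_rpow_atTop (by linarith)).comp tendsto_natCast_atTop_atTop).const_mul_atTop
      hc).eventually_ge_atTop _
  refine ((summable_nat_rpow_inv.mpr hr).mul_left (2 / c)).of_norm_bounded_eventually_nat ?_
  filter_upwards [hu, hgrow, eventually_gt_atTop 0] with n hun hbn hn
  have hpos : 0 < c * (n : ℝ) ^ r := by positivity
  rw [norm_of_nonneg (one_div_nonneg.mpr (by linarith))]
  calc 1 / u n ≤ 1 / (c * (n : ℝ) ^ r / 2) :=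
        one_div_le_one_div_of_le (by positivity) (by linarith)
    _ = 2 / c * ((n : ℝ) ^ r)⁻¹ := by field_simp

theorem neg_I_mul_sub_neg_I_mul_add (a b c : ℝ) :
    -Complex.I * a - -Complex.I * b + c = ⟨c, b - a⟩ := by
  apply Complex.ext <;> simp; ring

/-- In the paper's notation `λ_n = -i ω_n` with `ω_n = dispersion g h n`. -/
noncomputable def dispersion (g h : ℝ) (n : ℕ) : ℝ := √(n * (g + n ^ 2) * tanh (h * n))

section Dispersion

variable {g h : ℝ}

theorem dispersion_nonneg (n : ℕ) : 0 ≤ dispersion g h n := sqrt_nonneg _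

theorem dispersion_monotone (hg : 0 ≤ g) (hh : 0 ≤ h) : Monotone (dispersion g h) := by
  intro m n hmn
  have hmn' : (m : ℝ) ≤ n := by exact_mod_cast hmn
  refine sqrt_le_sqrt (mul_le_mul ?_ (tanh_le_tanh (by gcongr)) (tanh_nonneg (by positivity))
    (by positivity))
  gcongr

theorem dispersion_sq_le (hg : 0 ≤ g) (n : ℕ) : dispersion g h n ^ 2 ≤ n * (g + n ^ 2) := by
  have hX : (0 : ℝ) ≤ n * (g + n ^ 2) := by positivity
  calc dispersion g h n ^ 2 ≤ √(n * (g + n ^ 2)) ^ 2 :=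
        pow_le_pow_left₀ (dispersion_nonneg n)
          (sqrt_le_sqrt (mul_le_of_le_one_right hX (tanh_lt_one _).le)) 2
    _ = n * (g + n ^ 2) := sq_sqrt hX

theorem eventually_pow_three_sub_one_le_dispersion_sq (hg : 0 ≤ g) (hh : 0 < h) :
    ∀ᶠ n : ℕ in atTop, (n : ℝ) ^ 3 - 1 ≤ dispersion g h n ^ 2 := by
  have hexp : ∀ᶠ x : ℝ in atTop, x ^ 3 * (2 * exp (-(2 * (h * x)))) ≤ 1 := by
    filter_upwards [(isLittleO_pow_exp_pos_mul_atTop 3 (by positivity : 0 < 2 * h)).bound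
      (by norm_num : (0 : ℝ) < 1 / 2), eventually_ge_atTop 0] with x hx hx0
    rw [norm_of_nonneg (by positivity), norm_of_nonneg (exp_pos _).le] at hx
    have hinv : exp (2 * h * x) * exp (-(2 * (h * x))) = 1 := by
      rw [← exp_add]; ring_nf; exact exp_zero
    nlinarith [exp_pos (-(2 * (h * x)))]
  filter_upwards [tendsto_natCast_atTop_atTop.eventually hexp] with n hn
  have hn0 : (0 : ℝ) ≤ n := n.cast_nonneg
  have ht0 : 0 ≤ tanh (h * n) := tanh_nonneg (by positivity)
  rw [dispersion, sq_sqrt (by positivity)]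
  nlinarith [mul_le_mul_of_nonneg_left (one_sub_two_mul_exp_neg_le_tanh (h * n))
    (pow_nonneg hn0 3), mul_nonneg (mul_nonneg hn0 hg) ht0]

theorem eventually_rpow_le_two_mul_dispersion (hg : 0 ≤ g) (hh : 0 < h) :
    ∀ᶠ n : ℕ in atTop, (n : ℝ) ^ (3 / 2 : ℝ) ≤ 2 * dispersion g h n := by
  filter_upwards [eventually_pow_three_sub_one_le_dispersion_sq hg hh, eventually_ge_atTop 2]
    with n hn hn2
  have hn2' : (2 : ℝ) ≤ n := by exact_mod_cast hn2
  have hsq : ((n : ℝ) ^ (3 / 2 : ℝ)) ^ 2 = (n : ℝ) ^ 3 := by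
    rw [← rpow_natCast, ← rpow_mul n.cast_nonneg]; norm_num
  refine le_of_sq_le_sq ?_ (mul_nonneg zero_le_two (dispersion_nonneg n))
  rw [hsq]
  nlinarith [pow_le_pow_left₀ zero_le_two hn2' 3]

theorem dispersion_gap_le (hg : 0 ≤ g) (hh : 0 < h) {c : ℝ} (hc : 0 ≤ c) :
    ∀ᶠ p : ℕ in atTop, ∀ k ∈ Icc 1 4,
      dispersion g h (p + k) - dispersion g h p + c ≤ 2 * k * √p := by
  filter_upwards [eventually_pow_three_sub_one_le_dispersion_sq hg hh,
    tendsto_natCast_atTop_atTop.eventually_ge_atTop ((2 * c + (g + 2) * 5 ^ 3) ^ 2)]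
    with p hp hbig k hk
  obtain ⟨hk1, hk4⟩ := mem_Icc.mp hk
  have hk1' : (1 : ℝ) ≤ k := by exact_mod_cast hk1
  have hk4' : (k : ℝ) ≤ 4 := by exact_mod_cast hk4
  have hpq : (p : ℝ) = √p ^ 2 := (sq_sqrt p.cast_nonneg).symm
  refine sub_add_le_of_sq_bounds hc hg hk1' (dispersion_nonneg p) ?_ ?_ ?_
  · calc 2 * c + (g + 2) * ((k : ℝ) + 1) ^ 3 ≤ 2 * c + (g + 2) * 5 ^ 3 := by gcongr; linarith
      _ ≤ √p := le_sqrt_of_sq_le hbig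
  · rw [← hpq]
    simpa using dispersion_sq_le (h := h) hg (p + k)
  · rwa [show √(p : ℝ) ^ 6 = (√p ^ 2) ^ 3 by ring, ← hpq]

theorem summable_one_div_norm_dispersion (hg : 0 ≤ g) (hh : 0 < h) (c : ℝ) (p : ℕ) :
    Summable fun n : ℕ => if n = 0 ∨ n = p then 0 else
      1 / ‖-Complex.I * dispersion g h n - -Complex.I * dispersion g h p + c‖ := by
  have hnorm : Summable fun n : ℕ =>
      1 / ‖-Complex.I * dispersion g h n - -Complex.I * dispersion g h p + c‖ := by
    refine summable_one_div_of_rpow_le_add (b := dispersion g h p) (c := 1 / 2) one_half_pos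
      (by norm_num : (1 : ℝ) < 3 / 2) ?_
    filter_upwards [eventually_rpow_le_two_mul_dispersion hg hh] with n hn
    have him : |dispersion g h p - dispersion g h n| ≤
        ‖(⟨c, dispersion g h p - dispersion g h n⟩ : ℂ)‖ :=
      Complex.abs_im_le_norm ⟨c, _⟩
    rw [neg_I_mul_sub_neg_I_mul_add]
    linarith [neg_abs_le (dispersion g h p - dispersion g h n)]
  refine hnorm.of_nonneg_of_le (fun n => ?_) (fun n => ?_) <;> split_ifs <;>
    first | positivity | exact le_rfl

theorem eventually_inv_sqrt_le_tsum (hg : 0 ≤ g) (hh : 0 < h) {c : ℝ} (hc : 0 < c) :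
    ∀ᶠ p : ℕ in atTop, 1 / √p ≤ ∑' n : ℕ, if n = 0 ∨ n = p then 0 else
      1 / ‖-Complex.I * dispersion g h n - -Complex.I * dispersion g h p + c‖ := by
  filter_upwards [dispersion_gap_le hg hh hc.le, eventually_gt_atTop 0] with p hgap hp
  set f : ℕ → ℝ := fun n => if n = 0 ∨ n = p then 0 else
    1 / ‖-Complex.I * dispersion g h n - -Complex.I * dispersion g h p + c‖ with hf
  have hsqrt : 0 < √(p : ℝ) := sqrt_pos.mpr (by exact_mod_cast hp)
  have hterm : ∀ k ∈ Icc 1 4, 1 / (2 * k * √p) ≤ f (p + k) := by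
    intro k hk
    have hk1 : 1 ≤ k := (mem_Icc.mp hk).1
    have hmono := dispersion_monotone hg hh.le (Nat.le_add_right p k)
    simp only [hf]
    rw [if_neg (by omega), neg_I_mul_sub_neg_I_mul_add]
    have hre := Complex.abs_re_le_norm ⟨c, dispersion g h p - dispersion g h (p + k)⟩
    have hle := Complex.norm_le_abs_re_add_abs_im ⟨c, dispersion g h p - dispersion g h (p + k)⟩
    rw [abs_of_pos hc] at hre hle
    rw [abs_of_nonpos (by linarith)] at hle
    exact one_div_le_one_div_of_le (by linarith) (by linarith [hgap k hk])
  have hf0 : ∀ n, 0 ≤ f n := fun n => by simp only [hf]; split_ifs <;> positivity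
  calc 1 / √p ≤ ∑ k ∈ Icc (1 : ℕ) 4, 1 / (2 * (k : ℝ) * √p) := by
        rw [show Icc (1 : ℕ) 4 = {1, 2, 3, 4} from rfl]
        norm_num
        linarith [inv_pos.mpr hsqrt]
    _ ≤ ∑ k ∈ Icc 1 4, f (p + k) := sum_le_sum hterm
    _ = ∑ n ∈ (Icc 1 4).map (addLeftEmbedding p), f n :=
        (sum_map (Icc 1 4) (addLeftEmbedding p) f).symm
    _ ≤ ∑' n, f n :=
        (summable_one_div_norm_dispersion hg hh c p).sum_le_tsum _ fun n _ => hf0 n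

end Dispersion

/-- For p large, (∑_{n ≠ p} 1/|λ_n − λ_p + λ|)² ≥ 1/p; consequently the weighted squares
are not summable (failure of the quadratically-close / Hilbert–Schmidt criterion). -/
theorem stmt7 (g h : ℝ) (hg : 0 < g) (hh : 0 < h)
    (lam : ℕ → ℂ)
    (hlam : ∀ n : ℕ, lam n =
      -Complex.I * Real.sqrt ((n : ℝ) * (g + (n : ℝ) ^ 2) * Real.tanh (h * n)))
    (lam0 : ℝ) (hlam0 : 0 < lam0) :
    (∃ N : ℕ, ∀ p : ℕ, N ≤ p →
      1 / (p : ℝ) ≤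
        (∑' n : ℕ, if n = 0 ∨ n = p then 0
          else 1 / ‖lam n - lam p + (lam0 : ℂ)‖) ^ 2) ∧
    ¬ Summable (fun p : ℕ => if p = 0 then 0 else
        (∑' n : ℕ, if n = 0 ∨ n = p then 0
          else 1 / ‖lam n - lam p + (lam0 : ℂ)‖) ^ 2) := by
  obtain rfl : lam = fun n => -Complex.I * dispersion g h n := funext hlam
  have key : ∀ᶠ p : ℕ in atTop, 1 / (p : ℝ) ≤ (∑' n : ℕ, if n = 0 ∨ n = p then 0 else
      1 / ‖-Complex.I * dispersion g h n - -Complex.I * dispersion g h p + lam0‖) ^ 2 := by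
    filter_upwards [eventually_inv_sqrt_le_tsum hg.le hh hlam0] with p hp
    calc 1 / (p : ℝ) = (1 / √p) ^ 2 := by rw [div_pow, one_pow, sq_sqrt p.cast_nonneg]
      _ ≤ _ := pow_le_pow_left₀ (by positivity) hp 2
  refine ⟨eventually_atTop.mp key,
    fun hs => not_summable_one_div_natCast (hs.of_norm_bounded_eventually_nat ?_)⟩
  filter_upwards [key, eventually_ne_atTop 0] with p hp hp0
  rwa [if_neg hp0, norm_of_nonneg (by positivity)]
end

section
/- Let λ > 0 and λ_n = −i·(n(g + n²)·tanh(hn))^{1/2}. For every ε > 0, the function p ↦ ∑_{n ∈ ℕ*, n ≠ p} 1/(λ_n − λ_p + λ) satisfies | ∑_{n ≠ p} 1/(λ_n − λ_p + λ) | ≤ C·log(p)·p^{−1/2} for p ≥ 2, for some C depending only on g, h, λ. -/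
/-!
Write `λ_n = -i ω(n)` with `ω(x) = √(x (g + x²) tanh (h x))`. As `λ_n - λ_p` is purely imaginary,
`|λ_n - λ_p + λ| ≥ |ω(n) - ω(p)|`. Since `tanh (h x) ∈ [tanh h, 1)` for `x ≥ 1`, `ω(x)²` is
comparable to `(x^{3/2})²`; writing `ω(n) - ω(p) = (ω(n)² - ω(p)²) / (ω(n) + ω(p))` this gives the
gap `|ω(n) - ω(p)| ≥ c √(max n p) |n - p|`. Summing the majorant `1 / (√(max n p) |n - p|)`
gives two harmonic sums `≤ (1 + log p) / √p`, over `n < p` and over `p < n ≤ 2p`, and for `n > 2p`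
a tail of `2 ∑ n^{-3/2}`, which is `≤ 4 / √p`.
-/

open Finset Real

namespace Real

theorem tanh_strictMono : StrictMono tanh := by
  intro x y hxy
  have hsinh : 0 < sinh y * cosh x - cosh y * sinh x := by
    rw [← sinh_sub]; exact sinh_pos_iff.2 (sub_pos.2 hxy)
  rw [tanh_eq_sinh_div_cosh, tanh_eq_sinh_div_cosh, div_lt_div_iff₀ (cosh_pos x) (cosh_pos y)]
  linarith

theorem tanh_pos {x : ℝ} (hx : 0 < x) : 0 < tanh x := by
  simpa using tanh_strictMono hx

end Real

theorem div_le_sqrt_sub_sqrt {a b s : ℝ} (ha : 0 ≤ a) (hab : a ≤ b) (hs : 0 < s)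
    (hsum : √a + √b ≤ s) : (b - a) / s ≤ √b - √a := by
  have hdiff : 0 ≤ √b - √a := sub_nonneg.2 (sqrt_le_sqrt hab)
  rw [div_le_iff₀ hs]
  calc b - a = (√b - √a) * (√a + √b) := by
        linear_combination sq_sqrt ha - sq_sqrt (ha.trans hab)
    _ ≤ (√b - √a) * s := mul_le_mul_of_nonneg_left hsum hdiff

theorem Complex.norm_inv_le_of_le_abs_im {z : ℂ} {d : ℝ} (hd : 0 < d) (h : d ≤ |z.im|) :
    ‖z⁻¹‖ ≤ d⁻¹ := by
  rw [norm_inv]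
  exact inv_anti₀ hd (h.trans (Complex.abs_im_le_norm z))

/-- `λ_n = -i · waterWaveFreq g h n`. -/
noncomputable def waterWaveFreq (g h x : ℝ) : ℝ := √(x * (g + x ^ 2) * tanh (h * x))

section WaterWaveFreq

variable {g h x y : ℝ}

theorem waterWaveFreq_le (hg : 0 ≤ g) (hx : 1 ≤ x) :
    waterWaveFreq g h x ≤ √(1 + g) * (x * √x) := by
  have hbound : x * (g + x ^ 2) * tanh (h * x) ≤ (1 + g) * (x * √x) ^ 2 := by
    rw [mul_pow, sq_sqrt (by linarith)]
    have hgx : g * x ≤ g * x ^ 3 :=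
      mul_le_mul_of_nonneg_left (by nlinarith [one_le_pow₀ (n := 2) hx]) hg
    calc x * (g + x ^ 2) * tanh (h * x) ≤ x * (g + x ^ 2) * 1 :=
          mul_le_mul_of_nonneg_left (tanh_lt_one _).le (by positivity)
      _ ≤ (1 + g) * (x ^ 2 * x) := by nlinarith
  calc waterWaveFreq g h x ≤ √((1 + g) * (x * √x) ^ 2) := sqrt_le_sqrt hbound
    _ = √(1 + g) * (x * √x) := by rw [sqrt_mul (by linarith), sqrt_sq (by positivity)]

theorem tanh_mul_cube_sub_le (hg : 0 ≤ g) (hh : 0 < h) (hx : 1 ≤ x) (hxy : x ≤ y) :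
    tanh h * (y ^ 3 - x ^ 3) ≤
      y * (g + y ^ 2) * tanh (h * y) - x * (g + x ^ 2) * tanh (h * x) := by
  have htx : tanh h ≤ tanh (h * x) := tanh_strictMono.monotone (by nlinarith)
  have hty : tanh (h * x) ≤ tanh (h * y) := tanh_strictMono.monotone (by nlinarith)
  have hpoly : y ^ 3 - x ^ 3 ≤ y * (g + y ^ 2) - x * (g + x ^ 2) := by
    nlinarith [mul_nonneg hg (sub_nonneg.2 hxy)]
  have hcube : 0 ≤ y ^ 3 - x ^ 3 := by
    nlinarith [pow_le_pow_left₀ (by linarith) hxy 3]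
  have htpos : 0 ≤ tanh (h * x) := (tanh_pos (by nlinarith)).le
  have hy : 0 ≤ y * (g + y ^ 2) := mul_nonneg (by linarith) (by positivity)
  nlinarith [mul_le_mul_of_nonneg_right htx hcube, mul_le_mul_of_nonneg_left hpoly htpos,
    mul_le_mul_of_nonneg_left hty hy]

theorem mul_sqrt_mul_sub_le_waterWaveFreq_sub (hg : 0 ≤ g) (hh : 0 < h) (hx : 1 ≤ x)
    (hxy : x ≤ y) :
    tanh h / √(1 + g) * (√y * (y - x)) ≤ waterWaveFreq g h y - waterWaveFreq g h x := by
  have hy : 1 ≤ y := hx.trans hxy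
  set s := √(1 + g) * (y * √y + x * √x) with hs_def
  have hs : 0 < s := by positivity
  have hcube : y ^ 3 - x ^ 3 = (y * √y - x * √x) * (y * √y + x * √x) := by
    linear_combination x ^ 2 * sq_sqrt (by linarith : 0 ≤ x) -
      y ^ 2 * sq_sqrt (by linarith : 0 ≤ y)
  have hmono : √y * (y - x) ≤ y * √y - x * √x := by
    nlinarith [mul_le_mul_of_nonneg_left (sqrt_le_sqrt hxy) (by linarith : 0 ≤ x)]
  have hdiff := tanh_mul_cube_sub_le hg hh hx hxy
  have hcube_nonneg : 0 ≤ tanh h * (y ^ 3 - x ^ 3) :=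
    mul_nonneg (tanh_pos hh).le (sub_nonneg.2 (pow_le_pow_left₀ (by linarith) hxy 3))
  have hFx : 0 ≤ x * (g + x ^ 2) * tanh (h * x) :=
    mul_nonneg (by positivity) (tanh_pos (by nlinarith)).le
  have hroot := div_le_sqrt_sub_sqrt hFx (by linarith) hs
    (add_le_add (waterWaveFreq_le (h := h) hg hx) (waterWaveFreq_le (h := h) hg hy) |>.trans_eq
      (by ring))
  calc tanh h / √(1 + g) * (√y * (y - x))
      ≤ tanh h / √(1 + g) * (y * √y - x * √x) := by
        gcongr; exact div_nonneg (tanh_pos hh).le (sqrt_nonneg _)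
    _ = tanh h * (y ^ 3 - x ^ 3) / s := by
        rw [hcube, hs_def]; field_simp
    _ ≤ _ := div_le_div_of_nonneg_right hdiff hs.le
    _ ≤ _ := hroot

theorem mul_sqrt_max_mul_abs_sub_le_abs_waterWaveFreq_sub (hg : 0 ≤ g) (hh : 0 < h)
    (hx : 1 ≤ x) (hy : 1 ≤ y) :
    tanh h / √(1 + g) * (√(max x y) * |x - y|) ≤ |waterWaveFreq g h x - waterWaveFreq g h y| := by
  wlog hxy : x ≤ y generalizing x y
  · rw [max_comm, abs_sub_comm, abs_sub_comm (waterWaveFreq g h x)]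
    exact this hy hx (le_of_not_ge hxy)
  rw [max_eq_right hxy, abs_sub_comm, abs_of_nonneg (sub_nonneg.2 hxy), abs_sub_comm]
  exact (mul_sqrt_mul_sub_le_waterWaveFreq_sub hg hh hx hxy).trans (le_abs_self _)

theorem norm_inv_neg_I_mul_waterWaveFreq_sub_add_le (hg : 0 ≤ g) (hh : 0 < h) (hx : 1 ≤ x)
    (hy : 1 ≤ y) (hxy : x ≠ y) (r : ℝ) :
    ‖(-Complex.I * waterWaveFreq g h x - -Complex.I * waterWaveFreq g h y + r)⁻¹‖ ≤
      (tanh h / √(1 + g))⁻¹ * (√(max x y) * |x - y|)⁻¹ := by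
  have hpos : 0 < tanh h / √(1 + g) * (√(max x y) * |x - y|) :=
    mul_pos (div_pos (tanh_pos hh) (sqrt_pos.2 (by linarith)))
      (mul_pos (sqrt_pos.2 (by positivity)) (abs_pos.2 (sub_ne_zero.2 hxy)))
  rw [← mul_inv]
  refine Complex.norm_inv_le_of_le_abs_im hpos ?_
  have him : (-Complex.I * waterWaveFreq g h x - -Complex.I * waterWaveFreq g h y + r).im =
      waterWaveFreq g h y - waterWaveFreq g h x := by
    simp only [neg_mul, sub_neg_eq_add, Complex.add_im, Complex.neg_im, Complex.mul_im,
      Complex.I_re, Complex.ofReal_im, mul_zero, Complex.I_im, Complex.ofReal_re, one_mul, zero_add,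
      add_zero]
    ring
  rw [him, abs_sub_comm (waterWaveFreq g h y)]
  exact mul_sqrt_max_mul_abs_sub_le_abs_waterWaveFreq_sub hg hh hx hy

end WaterWaveFreq

theorem sum_range_inv_add_one_le_one_add_log (n : ℕ) :
    ∑ i ∈ range n, ((i : ℝ) + 1)⁻¹ ≤ 1 + log n := by
  simpa [harmonic, Rat.cast_sum] using harmonic_le_one_add_log n

theorem inv_add_one_mul_sqrt_le {x : ℝ} (hx : 0 < x) :
    ((x + 1) * √(x + 1))⁻¹ ≤ 2 / √x - 2 / √(x + 1) := by
  have hab : √x ≤ √(x + 1) := sqrt_le_sqrt (by linarith)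
  have hsq : √(x + 1) ^ 2 = √x ^ 2 + 1 := by
    rw [sq_sqrt hx.le, sq_sqrt (by linarith)]
  have hx1 : x + 1 = √(x + 1) ^ 2 := (sq_sqrt (by linarith)).symm
  set a := √x
  set b := √(x + 1)
  have ha : 0 < a := sqrt_pos.2 hx
  have hb : 0 < b := ha.trans_le hab
  rw [hx1, div_sub_div _ _ ha.ne' hb.ne', le_div_iff₀ (by positivity), inv_mul_eq_div,
    div_le_iff₀ (by positivity)]
  -- `(b - a) (b + a) = 1`, so the right-hand side is `2 / (a b (a + b)) ≥ 1 / b³`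
  have hcubic : 0 ≤ (b - a) * b * (2 * b ^ 2 - a ^ 2 - a * b) :=
    mul_nonneg (mul_nonneg (sub_nonneg.2 hab) hb.le) (by nlinarith)
  linear_combination hcubic - a * b * hsq

theorem sum_range_inv_mul_sqrt_le {M : ℝ} (hM : 0 < M) (k : ℕ) :
    ∑ i ∈ range k, ((M + i + 1) * √(M + i + 1))⁻¹ ≤ 2 / √M := by
  calc ∑ i ∈ range k, ((M + i + 1) * √(M + i + 1))⁻¹
      ≤ ∑ i ∈ range k, (2 / √(M + i) - 2 / √(M + (i + 1 : ℕ))) := by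
        gcongr with i
        rw [Nat.cast_succ, ← add_assoc]
        exact inv_add_one_mul_sqrt_le (by positivity)
    _ = 2 / √M - 2 / √(M + k) := by
        rw [sum_range_sub' (fun i : ℕ => 2 / √(M + i))]; simp
    _ ≤ 2 / √M := by linarith [div_nonneg zero_le_two (sqrt_nonneg (M + k))]

/-- `|λ_n - λ_p| ≥ c / gapWeight p n` for `n ≠ p`; at `n = p` the value is `0⁻¹ = 0`. -/
noncomputable def gapWeight (p n : ℕ) : ℝ := (√(max (n : ℝ) p) * |(n : ℝ) - p|)⁻¹

section GapWeight

variable {p : ℕ}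

theorem sum_range_gapWeight_self_le (hp : 1 ≤ p) :
    ∑ n ∈ range p, gapWeight p n ≤ (1 + log p) / √p := by
  have hp' : (1 : ℝ) ≤ p := by exact_mod_cast hp
  rw [← sum_range_reflect, div_eq_mul_inv]
  calc ∑ i ∈ range p, gapWeight p (p - 1 - i) = ∑ i ∈ range p, ((i : ℝ) + 1)⁻¹ * (√p)⁻¹ := by
        refine sum_congr rfl fun i hi ↦ ?_
        have hi : i < p := mem_range.1 hi
        have hcast : ((p - 1 - i : ℕ) : ℝ) = p - 1 - i := by
          rw [Nat.cast_sub (by omega), Nat.cast_sub hp, Nat.cast_one]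
        rw [gapWeight, hcast, max_eq_right (by linarith), abs_of_neg (by linarith), mul_inv,
          mul_comm]
        ring_nf
    _ ≤ (1 + log p) * (√p)⁻¹ := by
        rw [← sum_mul]; gcongr; exact sum_range_inv_add_one_le_one_add_log p

theorem sum_range_gapWeight_add_le (hp : 1 ≤ p) :
    ∑ i ∈ range p, gapWeight p (p + 1 + i) ≤ (1 + log p) / √p := by
  have hp' : (1 : ℝ) ≤ p := by exact_mod_cast hp
  calc ∑ i ∈ range p, gapWeight p (p + 1 + i) ≤ ∑ i ∈ range p, ((i : ℝ) + 1)⁻¹ * (√p)⁻¹ := by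
        refine sum_le_sum fun i _ ↦ ?_
        have hpi : (p : ℝ) ≤ p + 1 + i := by linarith [(Nat.cast_nonneg i : (0 : ℝ) ≤ i)]
        rw [gapWeight]
        push_cast
        rw [max_eq_left hpi, abs_of_pos (by linarith), ← mul_inv, mul_comm]
        gcongr
        linarith
    _ ≤ (1 + log p) / √p := by
        rw [← sum_mul, div_eq_mul_inv]; gcongr; exact sum_range_inv_add_one_le_one_add_log p

theorem sum_range_gapWeight_tail_le (hp : 1 ≤ p) (N : ℕ) :
    ∑ i ∈ range N, gapWeight p (p + 1 + p + i) ≤ 4 / √p := by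
  have hp' : (1 : ℝ) ≤ p := by exact_mod_cast hp
  calc ∑ i ∈ range N, gapWeight p (p + 1 + p + i)
      ≤ ∑ i ∈ range N, 2 * ((2 * p + i + 1) * √(2 * p + i + 1))⁻¹ := by
        refine sum_le_sum fun i _ ↦ ?_
        have hi : (0 : ℝ) ≤ i := Nat.cast_nonneg i
        rw [gapWeight]
        push_cast
        rw [max_eq_left (by linarith), abs_of_pos (by linarith),
          show (p : ℝ) + 1 + p + i = 2 * p + i + 1 by ring, ← div_eq_mul_inv, ← inv_div]
        gcongr
        nlinarith [sqrt_nonneg (2 * (p : ℝ) + i + 1)]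
    _ ≤ 2 * (2 / √(2 * p)) := by
        rw [← mul_sum]; gcongr; exact sum_range_inv_mul_sqrt_le (by positivity) N
    _ ≤ 4 / √p := by
        rw [← mul_div_assoc]; gcongr; norm_num
        linarith

theorem sum_range_gapWeight_le (hp : 1 ≤ p) (N : ℕ) :
    ∑ n ∈ range N, gapWeight p n ≤ (2 * log p + 6) / √p := by
  calc ∑ n ∈ range N, gapWeight p n ≤ ∑ n ∈ range (p + 1 + p + N), gapWeight p n :=
        sum_le_sum_of_subset_of_nonneg (range_subset_range.2 (by omega)) fun n _ _ ↦ by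
          rw [gapWeight]; positivity
    _ = ∑ n ∈ range p, gapWeight p n + gapWeight p p + ∑ i ∈ range p, gapWeight p (p + 1 + i) +
          ∑ i ∈ range N, gapWeight p (p + 1 + p + i) := by
        rw [sum_range_add, sum_range_add, sum_range_succ]
    _ ≤ (1 + log p) / √p + 0 + (1 + log p) / √p + 4 / √p := by
        gcongr
        · exact sum_range_gapWeight_self_le hp
        · simp [gapWeight]
        · exact sum_range_gapWeight_add_le hp
        · exact sum_range_gapWeight_tail_le hp N
    _ = (2 * log p + 6) / √p := by ring

end GapWeight

theorem two_mul_log_add_six_div_sqrt_le {x : ℝ} (hx : 2 ≤ x) :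
    (2 * log x + 6) / √x ≤ (2 + 6 / log 2) * log x * x ^ (-(1 : ℝ) / 2) := by
  have hlog2 : 0 < log 2 := log_pos one_lt_two
  have hlog : log 2 ≤ log x := log_le_log two_pos hx
  have hrpow : x ^ (-(1 : ℝ) / 2) = (√x)⁻¹ := by
    rw [neg_div, rpow_neg (by linarith), sqrt_eq_rpow]
  have hsix : 6 ≤ 6 / log 2 * log x := by
    rw [div_mul_eq_mul_div, le_div_iff₀ hlog2]; linarith
  rw [hrpow, ← div_eq_mul_inv]
  gcongr
  linarith

theorem stmt13_general (g h : ℝ) (hg : 0 < g) (hh : 0 < h)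
    (lam : ℕ → ℂ)
    (hlam : ∀ n : ℕ, lam n =
      -Complex.I * Real.sqrt ((n : ℝ) * (g + (n : ℝ) ^ 2) * Real.tanh (h * n)))
    (lam0 : ℝ) :
    ∃ C : ℝ, 0 < C ∧ ∀ p : ℕ, 2 ≤ p →
      ‖(∑' n : ℕ, if n = 0 ∨ n = p then 0
          else (lam n - lam p + (lam0 : ℂ))⁻¹)‖
        ≤ C * Real.log p * (p : ℝ) ^ (-(1 : ℝ) / 2) := by
  set c := tanh h / √(1 + g)
  have hc : 0 < c := div_pos (tanh_pos hh) (sqrt_pos.2 (by linarith))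
  refine ⟨c⁻¹ * (2 + 6 / log 2), by positivity, fun p hp ↦ ?_⟩
  set a : ℕ → ℂ := fun n ↦ if n = 0 ∨ n = p then 0 else (lam n - lam p + (lam0 : ℂ))⁻¹
  have hterm : ∀ n, ‖a n‖ ≤ c⁻¹ * gapWeight p n := by
    intro n
    by_cases hn : n = 0 ∨ n = p
    · simp only [a, if_pos hn, norm_zero, gapWeight]
      positivity
    · obtain ⟨hn0, hnp⟩ := not_or.1 hn
      simp only [a, if_neg hn, hlam]
      exact norm_inv_neg_I_mul_waterWaveFreq_sub_add_le hg.le hh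
        (by exact_mod_cast Nat.one_le_iff_ne_zero.2 hn0) (by exact_mod_cast (by omega : 1 ≤ p))
        (by exact_mod_cast hnp) lam0
  have hpartial : ∀ N, ∑ n ∈ range N, ‖a n‖ ≤ c⁻¹ * ((2 * log p + 6) / √p) := fun N ↦
    (sum_le_sum fun n _ ↦ hterm n).trans <| by
      rw [← mul_sum]; gcongr; exact sum_range_gapWeight_le (by omega) N
  have hsum := summable_of_sum_range_le (fun _ ↦ norm_nonneg _) hpartial
  calc ‖∑' n, a n‖ ≤ ∑' n, ‖a n‖ := norm_tsum_le_tsum_norm hsum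
    _ ≤ c⁻¹ * ((2 * log p + 6) / √p) := hsum.tsum_le_of_sum_range_le hpartial
    _ ≤ c⁻¹ * ((2 + 6 / log 2) * log p * (p : ℝ) ^ (-(1 : ℝ) / 2)) := by
        gcongr; exact two_mul_log_add_six_div_sqrt_le (by exact_mod_cast hp)
    _ = c⁻¹ * (2 + 6 / log 2) * log p * (p : ℝ) ^ (-(1 : ℝ) / 2) := by ring

/-- |∑_{n ≠ p} 1/(λ_n − λ_p + λ)| ≤ C·log(p)·p^{−1/2} for p ≥ 2. -/
theorem stmt13 (g h : ℝ) (hg : 0 < g) (hh : 0 < h)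
    (lam : ℕ → ℂ)
    (hlam : ∀ n : ℕ, lam n =
      -Complex.I * Real.sqrt ((n : ℝ) * (g + (n : ℝ) ^ 2) * Real.tanh (h * n)))
    (lam0 : ℝ) (hlam0 : 0 < lam0) :
    ∃ C : ℝ, 0 < C ∧ ∀ p : ℕ, 2 ≤ p →
      ‖(∑' n : ℕ, if n = 0 ∨ n = p then 0
          else (lam n - lam p + (lam0 : ℂ))⁻¹)‖
        ≤ C * Real.log p * (p : ℝ) ^ (-(1 : ℝ) / 2) :=
  stmt13_general g h hg hh lam hlam lam0
end
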